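/- Fix an integer $N \geq 2$. Define for $a > 0$ and $x \geq 0$: $f(x) = \sum_{j=1}^{N} \frac{1}{[1 + a^2 - 2a\cos(\frac{2j-1}{N}\pi) + x]^{3/2}} - \sum_{j=1}^{N} \frac{1}{[1 + a^2 - 2a\cos(\frac{2j}{N}\pi) + x]^{3/2}}$. Then $f(x) < 0$ for all $x \in [0,\infty)$, except at the singular point where $a = 1$ and $x = 0$ (where a denominator vanishes). -/

import Mathlib

open Real Finset

/-!
With `A = 1 + a² + x` and `t = 2a/A`, which is `< 1` away from the singular point,
`(A - 2a cos θ)^(-3/2) = A^(-3/2) ∑ₙ cₙ tⁿ cosⁿ θ` with binomial coefficients `cₙ > 0`.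
So minus the left-hand side is `A^(-3/2) ∑ₙ cₙ tⁿ Dₙ`, where `Dₙ` is the sum of `cosⁿ` over the
even nodes `2jπ/N` minus its sum over the odd nodes `(2j-1)π/N`. Expanding
`(2 cos θ)ⁿ = ∑ᵢ (n choose i) cos((2i - n)θ)`, each `Dₙ` is a nonnegative combination of the
alternating node sums of `cos(mθ)`, which vanish unless `N ∣ m` (a sum of nontrivial `N`-th roots of
unity) and are `≥ 0` when `N ∣ m` (the even nodes are maxima of `cos(mθ)`). For `n = N` the term
`m = N` contributes `2N`, so `D_N > 0`.
-/

theorem Ring.choose_add_sub_one_pos {a : ℝ} (ha : 0 < a) (n : ℕ) :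
    0 < Ring.choose (a + n - 1) n := by
  have h := Ring.factorial_nsmul_multichoose_eq_ascPochhammer a n
  rw [Ring.multichoose_eq, Polynomial.ascPochhammer_smeval_eq_eval, nsmul_eq_mul] at h
  exact pos_of_mul_pos_right (h ▸ ascPochhammer_pos n a ha) (Nat.cast_nonneg _)

theorem hasSum_choose_mul_pow_one_sub_rpow_neg (a : ℝ) {u : ℝ} (hu : |u| < 1) :
    HasSum (fun n : ℕ => Ring.choose (a + n - 1) n * u ^ n) ((1 - u) ^ (-a)) := by
  have h := (Real.one_div_one_sub_rpow_hasFPowerSeriesOnBall_zero a).hasSum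
    (y := u) (by simpa [enorm_eq_nnnorm, ← NNReal.coe_lt_coe] using hu)
  simp only [FormalMultilinearSeries.ofScalars_apply_eq, smul_eq_mul, zero_add] at h
  rwa [one_div, ← Real.rpow_neg (by linarith [(abs_lt.1 hu).2])] at h

theorem hasSum_sub_mul_rpow_neg (a : ℝ) {A B y : ℝ} (hBA : |B| < A) (hy : |y| ≤ 1) :
    HasSum (fun n : ℕ => A ^ (-a) * Ring.choose (a + n - 1) n * (B / A) ^ n * y ^ n)
      ((A - B * y) ^ (-a)) := by
  have hA : 0 < A := (abs_nonneg B).trans_lt hBA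
  have hu : |B / A * y| < 1 := by
    rw [abs_mul, abs_div, abs_of_pos hA]
    calc |B| / A * |y| ≤ |B| / A * 1 := by gcongr
      _ < 1 := by rw [mul_one, div_lt_one hA]; exact hBA
  have hbase : A - B * y = A * (1 - B / A * y) := by field_simp
  rw [hbase, Real.mul_rpow hA.le (by linarith [(abs_lt.1 hu).2])]
  simpa only [mul_pow, ← mul_assoc] using
    (hasSum_choose_mul_pow_one_sub_rpow_neg a hu).mul_left (A ^ (-a))

theorem two_mul_cos_pow (θ : ℝ) (n : ℕ) :
    (2 * cos θ) ^ n = ∑ i ∈ range (n + 1), (n.choose i : ℝ) * cos (((2 * i - n : ℤ) : ℝ) * θ) := by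
  have h : (((2 * cos θ) ^ n : ℝ) : ℂ) = ∑ i ∈ range (n + 1),
      (n.choose i : ℂ) * Complex.exp (((((2 * i - n : ℤ) : ℝ) * θ : ℝ) : ℂ) * Complex.I) := by
    rw [Complex.ofReal_pow, Complex.ofReal_mul, Complex.ofReal_cos, Complex.ofReal_ofNat,
      Complex.two_cos, add_pow]
    refine sum_congr rfl fun i hi => ?_
    rw [← Complex.exp_nat_mul, ← Complex.exp_nat_mul, ← Complex.exp_add, mul_comm]
    push_cast [Nat.cast_sub (mem_range_succ_iff.1 hi)]
    congr 2
    ring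
  simpa only [Complex.ofReal_re, Complex.re_sum, ← Complex.ofReal_natCast, Complex.re_ofReal_mul,
    Complex.exp_ofReal_mul_I_re] using congrArg Complex.re h

section AltNodeSum

variable {E : Type*} [AddCommGroup E]

/-- `∑_{k=1}^{2N} (-1)^k g(kπ/N)`, grouped into the pairs `k = 2j, 2j - 1`. -/
noncomputable def altNodeSum (N : ℕ) (g : ℝ → E) : E :=
  ∑ j ∈ Icc 1 N, (g (2 * j * π / N) - g ((2 * j - 1) * π / N))

theorem altNodeSum_sum {ι : Type*} (N : ℕ) (s : Finset ι) (g : ι → ℝ → E) :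
    altNodeSum N (fun θ => ∑ i ∈ s, g i θ) = ∑ i ∈ s, altNodeSum N (g i) := by
  simp only [altNodeSum, ← sum_sub_distrib]
  exact sum_comm

theorem HasSum.altNodeSum [TopologicalSpace E] [IsTopologicalAddGroup E] {N : ℕ}
    {f : ℕ → ℝ → E} {g : ℝ → E} (hf : ∀ θ, HasSum (fun n => f n θ) (g θ)) :
    HasSum (fun n => altNodeSum N (f n)) (altNodeSum N g) :=
  hasSum_sum fun _ _ => (hf _).sub (hf _)

end AltNodeSum

theorem altNodeSum_const_mul (N : ℕ) (c : ℝ) (g : ℝ → ℝ) :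
    altNodeSum N (fun θ => c * g θ) = c * altNodeSum N g := by
  simp only [altNodeSum, mul_sum, mul_sub]

theorem Complex.re_altNodeSum (N : ℕ) (g : ℝ → ℂ) :
    (altNodeSum N g).re = altNodeSum N (fun θ => (g θ).re) := by
  simp only [altNodeSum, Complex.re_sum, Complex.sub_re]

theorem altNodeSum_exp_eq_zero {N : ℕ} {m : ℤ} (hm : ¬ (N : ℤ) ∣ m) :
    altNodeSum N (fun θ => Complex.exp ((m * θ : ℝ) * Complex.I)) = 0 := by
  obtain rfl | hN := eq_or_ne N 0
  · simp [altNodeSum]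
  set ω := Complex.exp (2 * π * Complex.I / N)
  have hω : IsPrimitiveRoot ω N := Complex.isPrimitiveRoot_exp N hN
  set ζ := ω ^ m
  have hζ1 : ζ ≠ 1 := mt (hω.zpow_eq_one_iff_dvd m).1 hm
  have hζN : ζ ^ (N + 1) = ζ := by
    rw [pow_succ', ← zpow_natCast, ← zpow_mul, (hω.zpow_eq_one_iff_dvd _).2 (dvd_mul_left _ _),
      mul_one]
  have hterm : ∀ j : ℕ, Complex.exp ((m * (2 * j * π / N) : ℝ) * Complex.I)
      - Complex.exp ((m * ((2 * j - 1) * π / N) : ℝ) * Complex.I)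
      = (1 - Complex.exp (-(m * π / N : ℝ) * Complex.I)) * ζ ^ j := by
    intro j
    simp only [ζ, ω, ← Complex.exp_int_mul, ← Complex.exp_nat_mul, sub_mul, one_mul,
      ← Complex.exp_add]
    congr 2 <;> push_cast <;> ring
  rw [altNodeSum, sum_congr rfl fun j _ => hterm j, ← mul_sum, ← Finset.Ico_add_one_right_eq_Icc,
    geom_sum_Ico hζ1 (by omega), hζN, pow_one, sub_self, zero_div, mul_zero]

theorem altNodeSum_cos_int_mul_nonneg (N : ℕ) (m : ℤ) :
    0 ≤ altNodeSum N (fun θ => cos (m * θ)) := by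
  by_cases hm : (N : ℤ) ∣ m
  · obtain ⟨r, rfl⟩ := hm
    refine sum_nonneg fun j hj => ?_
    have hN : (N : ℝ) ≠ 0 := Nat.cast_ne_zero.2 (by have := mem_Icc.1 hj; omega)
    have heven : ((N * r : ℤ) : ℝ) * (2 * j * π / N) = ((r * j : ℤ) : ℝ) * (2 * π) := by
      push_cast
      field_simp
    dsimp only
    rw [heven, cos_int_mul_two_pi]
    exact sub_nonneg.2 (cos_le_one _)
  · have h := congrArg Complex.re (altNodeSum_exp_eq_zero hm)
    simp only [Complex.re_altNodeSum, Complex.exp_ofReal_mul_I_re, Complex.zero_re] at h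
    exact h.ge

theorem altNodeSum_cos_natCast_mul_self (N : ℕ) :
    altNodeSum N (fun θ => cos (N * θ)) = 2 * N := by
  have hterm : ∀ j ∈ Icc 1 N, cos (N * (2 * j * π / N)) - cos (N * ((2 * j - 1) * π / N)) = 2 := by
    intro j hj
    have hN : (N : ℝ) ≠ 0 := Nat.cast_ne_zero.2 (by have := mem_Icc.1 hj; omega)
    rw [show N * (2 * j * π / N) = j * (2 * π) by field_simp,
      show N * ((2 * j - 1) * π / N) = j * (2 * π) - π by field_simp,
      cos_sub_pi, cos_nat_mul_two_pi]
    norm_num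
  rw [altNodeSum, sum_congr rfl hterm, sum_const, Nat.card_Icc, nsmul_eq_mul]
  push_cast
  ring

theorem two_pow_mul_altNodeSum_cos_pow (N n : ℕ) :
    2 ^ n * altNodeSum N (fun θ => cos θ ^ n) =
      ∑ i ∈ range (n + 1),
        (n.choose i : ℝ) * altNodeSum N (fun θ => cos ((2 * i - n : ℤ) * θ)) := by
  simp only [← altNodeSum_const_mul, ← altNodeSum_sum, ← two_mul_cos_pow, mul_pow]

theorem altNodeSum_cos_pow_nonneg (N n : ℕ) : 0 ≤ altNodeSum N (fun θ => cos θ ^ n) := by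
  have h : 0 ≤ 2 ^ n * altNodeSum N (fun θ => cos θ ^ n) := by
    rw [two_pow_mul_altNodeSum_cos_pow]
    exact sum_nonneg fun i _ => mul_nonneg (Nat.cast_nonneg _) (altNodeSum_cos_int_mul_nonneg N _)
  exact (mul_nonneg_iff_of_pos_left (by positivity)).1 h

theorem altNodeSum_cos_pow_self_pos {N : ℕ} (hN : N ≠ 0) :
    0 < altNodeSum N (fun θ => cos θ ^ N) := by
  have h : 2 * (N : ℝ) ≤ 2 ^ N * altNodeSum N (fun θ => cos θ ^ N) := by
    rw [two_pow_mul_altNodeSum_cos_pow]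
    refine (le_of_eq ?_).trans (single_le_sum (f := fun i => (N.choose i : ℝ) *
      altNodeSum N (fun θ => cos ((2 * i - N : ℤ) * θ))) (fun i _ => mul_nonneg (Nat.cast_nonneg _)
      (altNodeSum_cos_int_mul_nonneg N _)) (self_mem_range_succ N))
    rw [Nat.choose_self, Nat.cast_one, one_mul, show 2 * (N : ℤ) - N = N by ring, Int.cast_natCast,
      altNodeSum_cos_natCast_mul_self]
  exact pos_of_mul_pos_right ((by positivity : (0 : ℝ) < 2 * N).trans_le h) (by positivity)

theorem altNodeSum_pos_of_hasSum_cos_pow {N : ℕ} (hN : N ≠ 0) {c : ℕ → ℝ} {g : ℝ → ℝ}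
    (hc : ∀ n, 0 ≤ c n) (hcN : 0 < c N) (hg : ∀ θ, HasSum (fun n => c n * cos θ ^ n) (g θ)) :
    0 < altNodeSum N g := by
  have h := HasSum.altNodeSum (N := N) hg
  simp only [altNodeSum_const_mul] at h
  exact hasSum_lt (f := 0) (fun n => mul_nonneg (hc n) (altNodeSum_cos_pow_nonneg N n))
    (mul_pos hcN (altNodeSum_cos_pow_self_pos hN)) hasSum_zero h

theorem stmt6 (N : ℕ) (hN : 2 ≤ N) (a : ℝ) (ha : 0 < a)
    (x : ℝ) (hx : 0 ≤ x) (hsing : ¬ (a = 1 ∧ x = 0)) :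
    ∑ j ∈ Finset.Icc 1 N,
        (1 + a ^ 2 - 2 * a * Real.cos ((2 * j - 1) * π / N) + x) ^ (-(3:ℝ)/2)
      - ∑ j ∈ Finset.Icc 1 N,
        (1 + a ^ 2 - 2 * a * Real.cos ((2 * j) * π / N) + x) ^ (-(3:ℝ)/2)
      < 0 := by
  set A := 1 + a ^ 2 + x
  have h2aA : |2 * a| < A := by
    rw [abs_of_pos (by positivity)]
    rcases not_and_or.1 hsing with h | h
    · nlinarith [mul_self_pos.2 (sub_ne_zero.2 h)]
    · nlinarith [lt_of_le_of_ne hx (Ne.symm h), sq_nonneg (a - 1)]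
  have hA : 0 < A := (abs_nonneg _).trans_lt h2aA
  have hexp : ∀ θ, HasSum (fun n : ℕ => A ^ (-(3 / 2 : ℝ)) * Ring.choose (3 / 2 + (n : ℝ) - 1) n
      * (2 * a / A) ^ n * cos θ ^ n) ((1 + a ^ 2 - 2 * a * cos θ + x) ^ (-(3 : ℝ) / 2)) := by
    intro θ
    rw [show 1 + a ^ 2 - 2 * a * cos θ + x = A - 2 * a * cos θ by ring, neg_div]
    exact hasSum_sub_mul_rpow_neg _ h2aA (abs_cos_le_one θ)
  have hc : ∀ n : ℕ,
      0 < A ^ (-(3 / 2 : ℝ)) * Ring.choose (3 / 2 + (n : ℝ) - 1) n * (2 * a / A) ^ n :=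
    fun n => by have := Ring.choose_add_sub_one_pos (by norm_num : (0 : ℝ) < 3 / 2) n; positivity
  have hpos := altNodeSum_pos_of_hasSum_cos_pow (by omega) (fun n => (hc n).le) (hc N) hexp
  rw [altNodeSum, sum_sub_distrib] at hpos
  linarith
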